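/- Every simple graph on a finite vertex type with at most 3 vertices that is an underlying push clique is a complete graph. -/

import Mathlib

/-!
If `u`, `v` are non-adjacent in a push clique `A`, the oriented clique `A` joins them by a
2-path through some `w`, on which `u` and `v` disagree. Pushing `{u}` keeps `u`, `v` non-adjacent
and flips agreement to disagreement at every other vertex, so the 2-path in `push {u} A` runs
through a vertex `w'` on which `u` and `v` agree in `A`. Hence `w ≠ w'`, and `u, v, w, w'` are
four distinct vertices.
-/

/-- A directed graph `A` on `V` is an oriented graph: irreflexive and asymmetric. -/
def IsOriented {V : Type*} (A : V → V → Prop) : Prop :=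
  (∀ v, ¬ A v v) ∧ ∀ u v, A u v → ¬ A v u

/-- `u` and `v` are adjacent in `A`. -/
def Adj {V : Type*} (A : V → V → Prop) (u v : V) : Prop :=
  A u v ∨ A v u

/-- The push of `A` by the vertex set `S`: arcs with exactly one endpoint in `S`
are reversed. -/
def push {V : Type*} (S : Set V) (A : V → V → Prop) (u v : V) : Prop :=
  (Xor' (u ∈ S) (v ∈ S) ∧ A v u) ∨ (¬ Xor' (u ∈ S) (v ∈ S) ∧ A u v)

/-- `u` and `v` agree on `w`. -/
def AgreeOn {V : Type*} (A : V → V → Prop) (u v w : V) : Prop :=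
  (A w u ∧ A w v) ∨ (A u w ∧ A v w)

/-- `u` and `v` disagree on `w`. -/
def DisagreeOn {V : Type*} (A : V → V → Prop) (u v w : V) : Prop :=
  (A u w ∧ A w v) ∨ (A w u ∧ A v w)

/-- `u` and `v` are joined by a directed 2-path in `A`. -/
def TwoPath {V : Type*} (A : V → V → Prop) (u v : V) : Prop :=
  ∃ w, (A u w ∧ A w v) ∨ (A v w ∧ A w u)

/-- `A` is an oriented clique: any two distinct vertices are adjacent or joined
by a directed 2-path. -/
def IsOrientedClique {V : Type*} (A : V → V → Prop) : Prop :=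
  ∀ u v, u ≠ v → Adj A u v ∨ TwoPath A u v

/-- `A` is a push clique: every push of `A` is an oriented clique. -/
def IsPushClique {V : Type*} (A : V → V → Prop) : Prop :=
  ∀ S : Set V, IsOrientedClique (push S A)

/-- `A` is an orientation of the simple graph `G`. -/
def IsOrientationOf {V : Type*} (A : V → V → Prop) (G : SimpleGraph V) : Prop :=
  IsOriented A ∧ ∀ u v, Adj A u v ↔ G.Adj u v

/-- `G` is an underlying push clique. -/
def IsUnderlyingPushClique {V : Type*} (G : SimpleGraph V) : Prop :=
  ∃ A : V → V → Prop, IsOrientationOf A G ∧ IsPushClique A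

/-- `G` is an underlying oriented clique. -/
def IsUnderlyingOrientedClique {V : Type*} (G : SimpleGraph V) : Prop :=
  ∃ A : V → V → Prop, IsOrientationOf A G ∧ IsOrientedClique A

section

variable {V : Type*} {A : V → V → Prop} {u v w : V}

theorem push_iff (S : Set V) :
    push S A u v ↔ (Xor (u ∈ S) (v ∈ S) ∧ A v u) ∨ (¬ Xor (u ∈ S) (v ∈ S) ∧ A u v) :=
  Iff.rfl

theorem push_empty (A : V → V → Prop) : push ∅ A = A := by
  ext x y
  simp [push_iff]

theorem adj_push_iff (S : Set V) : Adj (push S A) u v ↔ Adj A u v := by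
  simp only [Adj, push_iff, xor_comm (v ∈ S)]
  tauto

theorem IsOriented.push (hA : IsOriented A) (S : Set V) : IsOriented (push S A) := by
  obtain ⟨hirr, hasym⟩ := hA
  refine ⟨fun x => by simpa [push_iff] using hirr x, fun x y => ?_⟩
  simp only [push_iff, xor_comm (y ∈ S)]
  have hxy := hasym x y
  have hyx := hasym y x
  tauto

theorem twoPath_iff_exists_disagreeOn : TwoPath A u v ↔ ∃ w, DisagreeOn A u v w := by
  simp only [TwoPath, DisagreeOn, and_comm (a := A v _)]

theorem IsOriented.ne_left_of_disagreeOn (hA : IsOriented A) (h : DisagreeOn A u v w) :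
    w ≠ u := by
  rintro rfl
  rcases h with ⟨h, -⟩ | ⟨h, -⟩ <;> exact hA.1 w h

theorem IsOriented.ne_right_of_disagreeOn (hA : IsOriented A) (h : DisagreeOn A u v w) :
    w ≠ v := by
  rintro rfl
  rcases h with ⟨-, h⟩ | ⟨-, h⟩ <;> exact hA.1 w h

theorem IsOriented.not_agreeOn_of_disagreeOn (hA : IsOriented A) (h : DisagreeOn A u v w) :
    ¬ AgreeOn A u v w := by
  have huw := hA.2 u w
  have hvw := hA.2 v w
  unfold DisagreeOn at h
  unfold AgreeOn
  tauto

theorem IsOrientedClique.exists_disagreeOn (hA : IsOrientedClique A) (huv : u ≠ v)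
    (hadj : ¬ Adj A u v) : ∃ w, DisagreeOn A u v w :=
  twoPath_iff_exists_disagreeOn.1 ((hA u v huv).resolve_left hadj)

/-- Pushing `u` reverses the arc between `u` and `w` but not the one between `w` and `v`. -/
theorem disagreeOn_push_singleton_iff (hvu : v ≠ u) (hwu : w ≠ u) :
    DisagreeOn (push {u} A) u v w ↔ AgreeOn A u v w := by
  simp [DisagreeOn, AgreeOn, push_iff, hvu, hwu]

theorem IsPushClique.exists_disagreeOn_agreeOn (hO : IsOriented A) (hP : IsPushClique A)
    (huv : u ≠ v) (hadj : ¬ Adj A u v) :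
    ∃ w w', DisagreeOn A u v w ∧ AgreeOn A u v w' ∧ w' ≠ u ∧ w' ≠ v := by
  obtain ⟨w, hw⟩ := (push_empty A ▸ hP ∅).exists_disagreeOn huv hadj
  obtain ⟨w', hw'⟩ := (hP {u}).exists_disagreeOn huv ((adj_push_iff {u}).not.2 hadj)
  have hw'u := (hO.push {u}).ne_left_of_disagreeOn hw'
  exact ⟨w, w', hw, (disagreeOn_push_singleton_iff huv.symm hw'u).1 hw', hw'u,
    (hO.push {u}).ne_right_of_disagreeOn hw'⟩

theorem IsPushClique.adj_of_card_le_three [Fintype V] (hV : Fintype.card V ≤ 3)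
    (hO : IsOriented A) (hP : IsPushClique A) (huv : u ≠ v) : Adj A u v := by
  classical
  by_contra hadj
  obtain ⟨w, w', hw, hw', hw'u, hw'v⟩ := hP.exists_disagreeOn_agreeOn hO huv hadj
  have hww' : w ≠ w' := by
    rintro rfl
    exact hO.not_agreeOn_of_disagreeOn hw hw'
  have hcard : ({u, v, w, w'} : Finset V).card = 4 :=
    Finset.card_eq_four.2 ⟨u, v, w, w', huv, (hO.ne_left_of_disagreeOn hw).symm, hw'u.symm,
      (hO.ne_right_of_disagreeOn hw).symm, hw'v.symm, hww', rfl⟩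
  have hle := Finset.card_le_univ ({u, v, w, w'} : Finset V)
  omega

end

theorem stmt_9 {V : Type*} [Fintype V] (hV : Fintype.card V ≤ 3)
    (G : SimpleGraph V) (h : IsUnderlyingPushClique G) : G = ⊤ := by
  obtain ⟨A, ⟨hO, hadj⟩, hP⟩ := h
  ext u v
  exact ⟨G.ne_of_adj, fun huv => (hadj u v).1 (hP.adj_of_card_le_three hV hO huv)⟩
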